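/- arXiv:2002.06341 — 2 statements merged into one kernel-verified Lean document; each statement's English description precedes it below -/
import Mathlib

section
/- Let φ be a social choice function defined on all profiles with range {a,b}, where a, b are distinct alternatives (V not necessarily finite). Then φ is essentially ab-based and essentially ab-monotonic if and only if φ is compatible with the dominance relation ⊐, i.e., P ⊐_{φ(P)} Q implies φ(Q) = φ(P). -/
universe u v

variable {V : Type u} {A : Type v}

/-- A weak ordering on `A`: a complete (total) and transitive binary relation. -/
abbrev WeakOrd (A : Type v) := {W : A → A → Prop // Total W ∧ Transitive W}

/-- A profile assigns to every voter a weak ordering on the alternatives. -/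
abbrev Profile (V : Type u) (A : Type v) := V → WeakOrd A

/-- Strict preference `x ≻_W y`. -/
def SPref (W : WeakOrd A) (x y : A) : Prop := W.1 x y ∧ ¬ W.1 y x

/-- Indifference `x ∼_W y`. -/
def Indiff (W : WeakOrd A) (x y : A) : Prop := W.1 x y ∧ W.1 y x

/-- `D(a,P)` (relative to the pair `{a,b}`): voters strictly preferring `a` to `b`. -/
def Dset (a b : A) (P : Profile V A) : Set V := {v | SPref (P v) a b}

/-- `I(P)`: voters indifferent between `a` and `b`. -/
def Iset (a b : A) (P : Profile V A) : Set V := {v | Indiff (P v) a b}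

/-- The `{a,b}`-equivalence set `E(P,Q)`. -/
def Eset (a b : A) (P Q : Profile V A) : Set V :=
  {v | P v = Q v ∨ (SPref (P v) a b ∧ SPref (Q v) a b) ∨ (SPref (P v) b a ∧ SPref (Q v) b a)}

/-- `P ⊐_a Q`. -/
def DomA (a b : A) (P Q : Profile V A) : Prop :=
  (Set.univ : Set V) = Eset a b P Q ∪ (Iset a b P ∩ Dset a b Q)

/-- `P ⊐_b Q`. -/
def DomB (a b : A) (P Q : Profile V A) : Prop :=
  (Set.univ : Set V) = Eset a b P Q ∪ (Iset a b P ∩ Dset b a Q)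

/-- The coalition `D` can manipulate the profile `P` under `φ`. -/
def Manipulates (φ : Profile V A → A) (D : Set V) (P : Profile V A) : Prop :=
  D.Nonempty ∧ ∃ Q : Profile V A, (∀ v ∉ D, Q v = P v) ∧ ∀ v ∈ D, SPref (P v) (φ Q) (φ P)

/-- Coalitional strategy-proofness. -/
def CSP (φ : Profile V A → A) : Prop :=
  ∀ (D : Set V) (P : Profile V A), ¬ Manipulates φ D P

/-- A superset-closed family on the set `Wset`. -/
def SSCF (Wset : Set V) (F : Set (Set V)) : Prop :=
  (∀ E ∈ F, E ⊆ Wset) ∧ ∀ E₁ E₂ : Set V, E₁ ∈ F → E₁ ⊆ E₂ → E₂ ⊆ Wset → E₂ ∈ F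

/-- The dual family `F°` of `F` on `Wset`. -/
def dualF (Wset : Set V) (F : Set (Set V)) : Set (Set V) :=
  {E | E ⊆ Wset ∧ Wset \ E ∉ F}

/-- The class `𝓟_a(π,F)`, where the partial `{a,b}`-indifference profile `π` has domain `I`. -/
def ClassA (a b : A) (I : Set V) (pc : V → WeakOrd A) (F : Set (Set V)) :
    Set (Profile V A) :=
  {P | Dset a b P ∩ Iᶜ ∈ F ∧ ∀ v ∈ I, P v = pc v ∨ SPref (P v) a b}

/-- The class `𝓟_b(π,F)`, where the partial `{a,b}`-indifference profile `π` has domain `I`. -/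
def ClassB (a b : A) (I : Set V) (pc : V → WeakOrd A) (F : Set (Set V)) :
    Set (Profile V A) :=
  {P | Dset b a P ∩ Iᶜ ∈ dualF Iᶜ F ∧ ∀ v ∈ I, P v = pc v ∨ SPref (P v) b a}

/-- `𝓟_λ = 𝓟_a(π,F) ∪ 𝓟_b(π,F)`. -/
def PClass (a b : A) (I : Set V) (pc : V → WeakOrd A) (F : Set (Set V)) :
    Set (Profile V A) :=
  ClassA a b I pc F ∪ ClassB a b I pc F

/-- The set of indices `λ < β` with `P ∈ 𝓟_λ`; its least element is the index `λ(P)`,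
and `λ(P) = ∞` corresponds to this set being empty. -/
def idxSet (a b : A) (β : Ordinal.{max u v}) (I : Ordinal.{max u v} → Set V)
    (pc : Ordinal.{max u v} → V → WeakOrd A) (F : Ordinal.{max u v} → Set (Set V))
    (P : Profile V A) : Set Ordinal.{max u v} :=
  {l | l < β ∧ P ∈ PClass a b (I l) (pc l) (F l)}

/-- `⟨(π^λ)_{λ<β}, (F_λ)_{λ<β}⟩` is a double collection with respect to `{a,b}`:
`β ≥ 1`, each `π^λ` (with domain `I_λ`) is a partial `{a,b}`-indifference profile and
each `F_λ` is a superset-closed family on `I_λᶜ`. -/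
def IsDoubleCollection (a b : A) (β : Ordinal.{max u v}) (I : Ordinal.{max u v} → Set V)
    (pc : Ordinal.{max u v} → V → WeakOrd A) (F : Ordinal.{max u v} → Set (Set V)) : Prop :=
  1 ≤ β ∧ ∀ l < β, (∀ v ∈ I l, Indiff (pc l v) a b) ∧ SSCF (I l)ᶜ (F l)

/-- `ψ` is the ψ-type scf associated with `x` and the double collection: `ψ P = a` if
`P ∈ 𝓟_a(π^{λ(P)},F_{λ(P)})`, `ψ P = b` if `P ∈ 𝓟_b(π^{λ(P)},F_{λ(P)})`, and `ψ P = x`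
if `λ(P) = ∞`. -/
def IsPsiOf (a b x : A) (β : Ordinal.{max u v}) (I : Ordinal.{max u v} → Set V)
    (pc : Ordinal.{max u v} → V → WeakOrd A) (F : Ordinal.{max u v} → Set (Set V))
    (ψ : Profile V A → A) : Prop :=
  ∀ P : Profile V A,
    (∀ l, IsLeast (idxSet a b β I pc F P) l →
      (P ∈ ClassA a b (I l) (pc l) (F l) → ψ P = a) ∧
      (P ∈ ClassB a b (I l) (pc l) (F l) → ψ P = b)) ∧
    (idxSet a b β I pc F P = ∅ → ψ P = x)

/-- The condition `B₁(P,Q)`. -/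
def B1 (a b : A) (P Q : Profile V A) : Prop :=
  (∀ v ∈ Iset a b P ∩ Iset a b Q, P v = Q v) ∧
  Dset a b P ⊆ Dset a b Q ∧ Dset b a Q ⊆ Dset b a P

/-- The condition `B₂(P,Q) = B₁(Q,P)`. -/
def B2 (a b : A) (P Q : Profile V A) : Prop := B1 a b Q P

/-- `φ` is essentially ab-based. -/
def EssBased (a b : A) (φ : Profile V A → A) : Prop :=
  ∀ P Q : Profile V A, (∀ v ∈ Iset a b P, P v = Q v) →
    Dset a b P = Dset a b Q → Dset b a P = Dset b a Q → φ P = φ Q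

/-- `φ` is essentially ab-monotonic. -/
def EssMonotonic (a b : A) (φ : Profile V A → A) : Prop :=
  (∀ P Q : Profile V A, B1 a b P Q →
      (Dset a b P ⊂ Dset a b Q ∨ Dset b a Q ⊂ Dset b a P) → φ P = a → φ Q = a) ∧
  (∀ P Q : Profile V A, B2 a b P Q →
      (Dset a b Q ⊂ Dset a b P ∨ Dset b a P ⊂ Dset b a Q) → φ P = b → φ Q = b)

/-- Condition (1'): `B₁(P,Q)` and `φ P = a` imply `φ Q = a`. -/
def Cond1' (a b : A) (φ : Profile V A → A) : Prop :=
  ∀ P Q : Profile V A, B1 a b P Q → φ P = a → φ Q = a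

/-- Condition (2'): `B₂(P,Q)` and `φ P = b` imply `φ Q = b`. -/
def Cond2' (a b : A) (φ : Profile V A → A) : Prop :=
  ∀ P Q : Profile V A, B2 a b P Q → φ P = b → φ Q = b

/-- `φ` (with range `{a,b}`) is compatible with the dominance relation `⊐`:
`P ⊐_{φ(P)} Q` implies `φ Q = φ P`. -/
def Compatible (a b : A) (φ : Profile V A → A) : Prop :=
  ∀ P Q : Profile V A,
    ((φ P = a ∧ DomA a b P Q) ∨ (φ P = b ∧ DomB a b P Q)) → φ Q = φ P

/-! ### Auxiliary lemmas -/

/-- The totally indifferent weak order. -/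
def trivOrd : WeakOrd A := ⟨fun _ _ => True, fun _ _ => Or.inl trivial, fun _ _ _ _ _ => trivial⟩

lemma indiff_trivOrd (x y : A) : Indiff (trivOrd : WeakOrd A) x y := ⟨trivial, trivial⟩

lemma weak_tri (W : WeakOrd A) (x y : A) : SPref W x y ∨ SPref W y x ∨ Indiff W x y := by
  rcases W.2.1 x y with h | h
  · by_cases h' : W.1 y x
    · exact Or.inr (Or.inr ⟨h, h'⟩)
    · exact Or.inl ⟨h, h'⟩
  · by_cases h' : W.1 x y
    · exact Or.inr (Or.inr ⟨h', h⟩)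
    · exact Or.inr (Or.inl ⟨h, h'⟩)

lemma SPref.not_rev {W : WeakOrd A} {x y : A} (h : SPref W x y) : ¬ SPref W y x :=
  fun h' => h.2 h'.1

lemma Indiff.not_spref {W : WeakOrd A} {x y : A} (h : Indiff W x y) : ¬ SPref W x y :=
  fun h' => h'.2 h.2

lemma Indiff.not_spref_rev {W : WeakOrd A} {x y : A} (h : Indiff W x y) : ¬ SPref W y x :=
  fun h' => h'.2 h.1

lemma Indiff.symm {W : WeakOrd A} {x y : A} (h : Indiff W x y) : Indiff W y x := ⟨h.2, h.1⟩

lemma Eset_comm (a b : A) (P Q : Profile V A) : Eset b a P Q = Eset a b P Q := by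
  ext v; simp only [Eset, Set.mem_setOf_eq]; tauto

lemma Iset_comm (a b : A) (P : Profile V A) : Iset b a P = Iset a b P := by
  ext v; exact ⟨fun h => h.symm, fun h => h.symm⟩

lemma DomB_iff (a b : A) (P Q : Profile V A) : DomB a b P Q ↔ DomA b a P Q := by
  unfold DomA DomB
  rw [Eset_comm, Iset_comm]

lemma B2_iff (a b : A) (P Q : Profile V A) : B2 a b P Q ↔ B1 b a P Q := by
  constructor
  · rintro ⟨h1, h2, h3⟩
    exact ⟨fun v hv => (h1 v ⟨Indiff.symm hv.2, Indiff.symm hv.1⟩).symm, h3, h2⟩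
  · rintro ⟨h1, h2, h3⟩
    exact ⟨fun v hv => (h1 v ⟨Indiff.symm hv.2, Indiff.symm hv.1⟩).symm, h3, h2⟩

lemma Compatible.symm' {a b : A} {φ : Profile V A → A} (h : Compatible a b φ) :
    Compatible b a φ := by
  intro P Q hd
  rcases hd with ⟨h1, h2⟩ | ⟨h1, h2⟩
  · exact h P Q (Or.inr ⟨h1, (DomB_iff a b P Q).mpr h2⟩)
  · exact h P Q (Or.inl ⟨h1, (DomB_iff b a P Q).mp h2⟩)

lemma domA_imp_B1 {a b : A} (P Q : Profile V A) (h : DomA a b P Q) : B1 a b P Q := by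
  have hmem : ∀ v : V, v ∈ Eset a b P Q ∪ (Iset a b P ∩ Dset a b Q) := by
    intro v
    have := Set.mem_univ v
    rwa [h] at this
  refine ⟨?_, ?_, ?_⟩
  · rintro v ⟨hvP, hvQ⟩
    rcases hmem v with hE | ⟨_, hD⟩
    · rcases hE with heq | ⟨hs, _⟩ | ⟨hs, _⟩
      · exact heq
      · exact absurd hs (Indiff.not_spref hvP)
      · exact absurd hs (Indiff.not_spref_rev hvP)
    · exact absurd hD (Indiff.not_spref hvQ)
  · intro v hv
    rcases hmem v with hE | ⟨hI, _⟩
    · rcases hE with heq | ⟨_, hs⟩ | ⟨hs, _⟩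
      · show SPref (Q v) a b; rw [← heq]; exact hv
      · exact hs
      · exact absurd hv hs.not_rev
    · exact absurd (hv : SPref (P v) a b) (Indiff.not_spref hI)
  · intro v hv
    rcases hmem v with hE | ⟨_, hD⟩
    · rcases hE with heq | ⟨_, hs⟩ | ⟨hs, _⟩
      · show SPref (P v) b a; rw [heq]; exact hv
      · exact absurd hs (hv : SPref (Q v) b a).not_rev
      · exact hs
    · exact absurd hD (hv : SPref (Q v) b a).not_rev

/-- From compatibility: condition (1'). -/
lemma cond1_of_compatible {a b : A} (hab : a ≠ b) (φ : Profile V A → A)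
    (hrange : Set.range φ = {a, b}) (hc : Compatible a b φ) :
    ∀ P Q : Profile V A, B1 a b P Q → φ P = a → φ Q = a := by
  classical
  intro P Q hB hPa
  obtain ⟨h1, h2, h3⟩ := hB
  set M : Profile V A := fun v =>
    if SPref (P v) b a ∧ ¬ SPref (Q v) b a then
      (if Indiff (Q v) a b then Q v else trivOrd) else P v with hMdef
  have hMa : DomA a b M Q := by
    unfold DomA
    symm
    rw [Set.eq_univ_iff_forall]
    intro v
    by_cases hcond : SPref (P v) b a ∧ ¬ SPref (Q v) b a
    · have hMv : M v = if Indiff (Q v) a b then Q v else trivOrd := by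
        simp only [hMdef, if_pos hcond]
      by_cases hIQ : Indiff (Q v) a b
      · rw [if_pos hIQ] at hMv
        exact Or.inl (Or.inl hMv)
      · rw [if_neg hIQ] at hMv
        rcases weak_tri (Q v) a b with hQ | hQ | hQ
        · exact Or.inr ⟨(show Indiff (M v) a b by rw [hMv]; exact indiff_trivOrd a b), hQ⟩
        · exact absurd hQ hcond.2
        · exact absurd hQ hIQ
    · have hMv : M v = P v := by simp only [hMdef, if_neg hcond]
      rcases weak_tri (P v) a b with hP | hP | hP
      · exact Or.inl (Or.inr (Or.inl ⟨(show SPref (M v) a b by rw [hMv]; exact hP), h2 hP⟩))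
      · have hQ : SPref (Q v) b a := by
          by_contra hq
          exact hcond ⟨hP, hq⟩
        exact Or.inl (Or.inr (Or.inr ⟨(show SPref (M v) b a by rw [hMv]; exact hP), hQ⟩))
      · rcases weak_tri (Q v) a b with hQ | hQ | hQ
        · exact Or.inr ⟨(show Indiff (M v) a b by rw [hMv]; exact hP), hQ⟩
        · exact absurd (h3 hQ) (Indiff.not_spref_rev hP)
        · have : P v = Q v := h1 v ⟨hP, hQ⟩
          exact Or.inl (Or.inl (hMv.trans this))
  have hMb : DomB a b M P := by
    unfold DomB
    symm
    rw [Set.eq_univ_iff_forall]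
    intro v
    by_cases hcond : SPref (P v) b a ∧ ¬ SPref (Q v) b a
    · have hMind : Indiff (M v) a b := by
        simp only [hMdef, if_pos hcond]
        by_cases hIQ : Indiff (Q v) a b
        · rw [if_pos hIQ]; exact hIQ
        · rw [if_neg hIQ]; exact indiff_trivOrd a b
      exact Or.inr ⟨hMind, hcond.1⟩
    · have hMv : M v = P v := by simp only [hMdef, if_neg hcond]
      exact Or.inl (Or.inl hMv)
  have hmem : φ M ∈ ({a, b} : Set A) := by
    rw [← hrange]; exact Set.mem_range_self M
  rcases hmem with hma | hmb
  · rw [hc M Q (Or.inl ⟨hma, hMa⟩), hma]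
  · exfalso
    have hmb' : φ M = b := hmb
    have := hc M P (Or.inr ⟨hmb', hMb⟩)
    rw [this, hmb'] at hPa
    exact hab hPa.symm

/-- In the boundary case of `B1` (both inclusions equalities), the hypotheses of
essential ab-basedness hold. -/
lemma essBased_hyp_of_B1_eq {a b : A} {P Q : Profile V A}
    (h1 : ∀ v ∈ Iset a b P ∩ Iset a b Q, P v = Q v)
    (hDa : Dset a b P = Dset a b Q) (hDb : Dset b a Q = Dset b a P) :
    ∀ v ∈ Iset a b P, P v = Q v := by
  intro v hv
  have hvI : Indiff (P v) a b := hv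
  rcases weak_tri (Q v) a b with hQ | hQ | hQ
  · have : v ∈ Dset a b P := hDa ▸ (hQ : v ∈ Dset a b Q)
    exact absurd (this : SPref (P v) a b) (Indiff.not_spref hvI)
  · have : v ∈ Dset b a P := hDb ▸ (hQ : v ∈ Dset b a Q)
    exact absurd (this : SPref (P v) b a) (Indiff.not_spref_rev hvI)
  · exact h1 v ⟨hvI, hQ⟩

/-- Proposition 2.10: an scf with range `{a,b}` (V not necessarily finite) is essentially
ab-based and essentially ab-monotonic iff it is compatible with the dominance `⊐`. -/
theorem essBased_essMonotonic_iff_compatible (a b : A) (hab : a ≠ b)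
    (φ : Profile V A → A) (hrange : Set.range φ = {a, b}) :
    (EssBased a b φ ∧ EssMonotonic a b φ) ↔ Compatible a b φ := by
  constructor
  · rintro ⟨hbased, hmono1, hmono2⟩
    intro P Q hd
    rcases hd with ⟨hPa, hdom⟩ | ⟨hPb, hdom⟩
    · obtain ⟨h1, h2, h3⟩ := domA_imp_B1 P Q hdom
      by_cases heq : Dset a b P = Dset a b Q ∧ Dset b a Q = Dset b a P
      · exact (hbased P Q (essBased_hyp_of_B1_eq h1 heq.1 heq.2) heq.1 heq.2.symm).symm
      · have hstrict : Dset a b P ⊂ Dset a b Q ∨ Dset b a Q ⊂ Dset b a P := by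
          by_contra hcon
          push_neg at hcon
          exact heq ⟨h2.antisymm (fun v hv => by
              by_contra hvP
              exact hcon.1 ⟨h2, fun hsub => hvP (hsub hv)⟩),
            h3.antisymm (fun v hv => by
              by_contra hvQ
              exact hcon.2 ⟨h3, fun hsub => hvQ (hsub hv)⟩)⟩
        rw [hPa]
        exact hmono1 P Q ⟨h1, h2, h3⟩ hstrict hPa
    · have hB1' : B1 b a P Q := domA_imp_B1 P Q ((DomB_iff a b P Q).mp hdom)
      obtain ⟨h1, h2, h3⟩ := hB1'
      by_cases heq : Dset b a P = Dset b a Q ∧ Dset a b Q = Dset a b P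
      · have h1' : ∀ v ∈ Iset a b P ∩ Iset a b Q, P v = Q v :=
          fun v hv => h1 v ⟨Indiff.symm hv.1, Indiff.symm hv.2⟩
        have := essBased_hyp_of_B1_eq h1' heq.2.symm heq.1.symm
        exact (hbased P Q this heq.2.symm heq.1).symm
      · have hstrict : Dset a b Q ⊂ Dset a b P ∨ Dset b a P ⊂ Dset b a Q := by
          by_contra hcon
          push_neg at hcon
          exact heq ⟨h2.antisymm (fun v hv => by
              by_contra hvP
              exact hcon.2 ⟨h2, fun hsub => hvP (hsub hv)⟩),
            h3.antisymm (fun v hv => by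
              by_contra hvQ
              exact hcon.1 ⟨h3, fun hsub => hvQ (hsub hv)⟩)⟩
        rw [hPb]
        exact hmono2 P Q ((B2_iff a b P Q).mpr ⟨h1, h2, h3⟩) hstrict hPb
  · intro hc
    have hrange' : Set.range φ = {b, a} := by rw [hrange]; exact Set.pair_comm a b
    have hcond1 := cond1_of_compatible hab φ hrange hc
    have hcond2 := cond1_of_compatible hab.symm φ hrange' hc.symm'
    refine ⟨?_, ?_, ?_⟩
    · intro P Q hI hDa hDb
      have hE : ∀ v : V, v ∈ Eset a b P Q := by
        intro v
        rcases weak_tri (P v) a b with hP | hP | hP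
        · exact Or.inr (Or.inl ⟨hP, (Set.ext_iff.mp hDa v).mp hP⟩)
        · exact Or.inr (Or.inr ⟨hP, (Set.ext_iff.mp hDb v).mp hP⟩)
        · exact Or.inl (hI v hP)
      have hDomA : DomA a b P Q := by
        unfold DomA
        symm
        rw [Set.eq_univ_iff_forall]
        exact fun v => Or.inl (hE v)
      have hDomB : DomB a b P Q := by
        unfold DomB
        symm
        rw [Set.eq_univ_iff_forall]
        exact fun v => Or.inl (hE v)
      have hmem : φ P ∈ ({a, b} : Set A) := by
        rw [← hrange]; exact Set.mem_range_self P
      rcases hmem with hpa | hpb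
      · exact (hc P Q (Or.inl ⟨hpa, hDomA⟩)).symm
      · exact (hc P Q (Or.inr ⟨(hpb : φ P = b), hDomB⟩)).symm
    · intro P Q hB _ hPa
      exact hcond1 P Q hB hPa
    · intro P Q hB _ hPb
      exact hcond2 P Q ((B2_iff a b P Q).mp hB) hPb
end

section
/- Let φ be a coalitionally strategy-proof social choice function defined on all profiles with range {a,b}, where a, b are distinct alternatives. Then there exists a unique nonempty superset-closed family F of coalitions (F ⊆ 2^V, not containing the empty set, closed under supersets) such that for every profile P: D(a,P) ∈ F implies φ(P) = a, and D(b,P) ∈ F° implies φ(P) = b. -/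
universe u v

variable {V : Type u} {A : Type v}

section CommitteeHelpers

open Classical in
/-- The weak order with `x` strictly on top and everything else indifferent. -/
noncomputable def ordTop (x : A) : WeakOrd A :=
  ⟨fun p q => p = x ∨ q ≠ x, by
    constructor
    · intro p q
      by_cases h : p = x
      · exact Or.inl (Or.inl h)
      · exact Or.inr (Or.inr h)
    · intro p q r hpq hqr
      rcases hpq with h | h
      · exact Or.inl h
      · rcases hqr with h' | h'
        · exact absurd h' h
        · exact Or.inr h'⟩

lemma spref_ordTop {x y : A} (h : y ≠ x) : SPref (ordTop x) x y := by
  constructor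
  · exact Or.inl rfl
  · rintro (h1 | h2)
    · exact h h1
    · exact h2 rfl

lemma not_rel_ordTop {x y : A} (h : y ≠ x) : ¬ (ordTop x).1 y x := by
  rintro (h1 | h2)
  · exact h h1
  · exact h2 rfl

open Classical in
/-- The profile where voters in `S` have `a` on top and all others have `b` on top. -/
noncomputable def topProf (a b : A) (S : Set V) : Profile V A :=
  fun v => if v ∈ S then ordTop a else ordTop b

lemma Dset_topProf (a b : A) (hab : a ≠ b) (S : Set V) :
    Dset a b (topProf a b S) = S := by
  ext v
  simp only [Dset, Set.mem_setOf_eq]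
  by_cases hv : v ∈ S
  · have h1 : topProf a b S v = ordTop a := by simp [topProf, hv]
    rw [h1]
    exact iff_of_true (spref_ordTop hab.symm) hv
  · have h1 : topProf a b S v = ordTop b := by simp [topProf, hv]
    rw [h1]
    exact iff_of_false (fun hs => not_rel_ordTop hab hs.1) hv

lemma Dset_topProf' (a b : A) (hab : a ≠ b) (S : Set V) :
    Dset b a (topProf a b S) = Sᶜ := by
  ext v
  simp only [Dset, Set.mem_setOf_eq]
  by_cases hv : v ∈ S
  · have h1 : topProf a b S v = ordTop a := by simp [topProf, hv]
    rw [h1]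
    exact iff_of_false (fun hs => not_rel_ordTop hab.symm hs.1) (by simp [hv])
  · have h1 : topProf a b S v = ordTop b := by simp [topProf, hv]
    rw [h1]
    exact iff_of_true (spref_ordTop hab) (by simp [hv])

lemma range_cases {a b : A} {φ : Profile V A → A}
    (hrange : Set.range φ = {a, b}) (P : Profile V A) : φ P = a ∨ φ P = b := by
  have : φ P ∈ Set.range φ := Set.mem_range_self P
  rw [hrange] at this
  exact this

lemma nonempty_of_range {a b : A} {φ : Profile V A → A} (hab : a ≠ b)
    (hrange : Set.range φ = {a, b}) : Nonempty V := by
  by_contra h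
  obtain ⟨Pa, hPa⟩ : a ∈ Set.range φ := by rw [hrange]; exact Or.inl rfl
  obtain ⟨Pb, hPb⟩ : b ∈ Set.range φ := by rw [hrange]; exact Or.inr rfl
  have hPP : Pa = Pb := funext fun v => absurd ⟨v⟩ h
  exact hab (by rw [← hPa, ← hPb, hPP])

lemma allTop {a b : A} {φ : Profile V A → A} (hab : a ≠ b)
    (hrange : Set.range φ = {a, b}) (hcsp : CSP φ) :
    φ (topProf a b (Set.univ : Set V)) = a := by
  rcases range_cases hrange (topProf a b Set.univ) with h | h
  · exact h
  · exfalso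
    obtain ⟨Pa, hPa⟩ : a ∈ Set.range φ := by rw [hrange]; exact Or.inl rfl
    haveI : Nonempty V := nonempty_of_range hab hrange
    apply hcsp Set.univ (topProf a b Set.univ)
    refine ⟨Set.univ_nonempty, Pa, fun v hv => absurd (Set.mem_univ v) hv, fun v _ => ?_⟩
    rw [hPa, h]
    simp only [topProf, Set.mem_univ, if_true]
    exact spref_ordTop hab.symm

lemma topMono {a b : A} {φ : Profile V A → A} (hab : a ≠ b)
    (hrange : Set.range φ = {a, b}) (hcsp : CSP φ) {S T : Set V}
    (hS : φ (topProf a b S) = a) (hST : S ⊆ T) : φ (topProf a b T) = a := by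
  rcases range_cases hrange (topProf a b T) with h | h
  · exact h
  exfalso
  by_cases hTS : T \ S = ∅
  · have hTSeq : T = S := subset_antisymm (Set.diff_eq_empty.mp hTS) hST
    rw [hTSeq] at h
    exact hab (hS.symm.trans h)
  · apply hcsp (T \ S) (topProf a b T)
    refine ⟨Set.nonempty_iff_ne_empty.mpr hTS, topProf a b S, fun v hv => ?_, fun v hv => ?_⟩
    · by_cases hvS : v ∈ S
      · simp [topProf, hvS, hST hvS]
      · have hvT : v ∉ T := fun hvT => hv ⟨hvT, hvS⟩
        simp [topProf, hvS, hvT]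
    · rw [hS, h]
      simp only [topProf, hv.1, if_true]
      exact spref_ordTop hab.symm

lemma mainStep {a b : A} {φ : Profile V A → A} (hab : a ≠ b)
    (hrange : Set.range φ = {a, b}) (hcsp : CSP φ) (P : Profile V A)
    (hS : φ (topProf a b (Dset a b P)) = a) : φ P = a := by
  classical
  rcases range_cases hrange P with h | h
  · exact h
  exfalso
  set S := Dset a b P with hSdef
  set P' : Profile V A := fun v => if v ∈ S then ordTop a else P v with hP'def
  have hP' : φ P' = a := by
    rcases range_cases hrange P' with h' | h'
    · exact h'
    exfalso
    by_cases hSu : Sᶜ = (∅ : Set V)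
    · have hSuniv : S = Set.univ := by
        rw [← compl_compl S, hSu, Set.compl_empty]
      have hPP : P' = topProf a b S := funext fun v => by
        simp [hP'def, topProf, hSuniv]
      rw [hPP] at h'
      exact hab (hS.symm.trans h')
    · apply hcsp Sᶜ (topProf a b S)
      refine ⟨Set.nonempty_iff_ne_empty.mpr hSu, P', fun v hv => ?_, fun v hv => ?_⟩
      · have hvS : v ∈ S := not_not.mp hv
        simp [hP'def, topProf, hvS]
      · have hvS : v ∉ S := hv
        rw [h', hS]
        simp only [topProf, hvS, if_false]
        exact spref_ordTop hab
  by_cases hSe : S = (∅ : Set V)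
  · have hPP : P' = P := funext fun v => by simp [hP'def, hSe]
    rw [hPP] at hP'
    exact hab (hP'.symm.trans h)
  · apply hcsp S P
    refine ⟨Set.nonempty_iff_ne_empty.mpr hSe, P', fun v hv => ?_, fun v hv => ?_⟩
    · simp [hP'def, hv]
    · rw [hP', h]
      exact hv

end CommitteeHelpers

/-- Proposition 5.1: for a CSP scf with range `{a,b}` there is a unique nonempty
superset-closed family `F` of coalitions such that `D(a,P) ∈ F` forces `φ P = a` and
`D(b,P) ∈ F°` forces `φ P = b`. -/
theorem exists_unique_committee (a b : A) (hab : a ≠ b)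
    (φ : Profile V A → A) (hrange : Set.range φ = {a, b}) (hcsp : CSP φ) :
    ∃! F : Set (Set V),
      (F.Nonempty ∧ ∅ ∉ F ∧ ∀ E₁ E₂ : Set V, E₁ ∈ F → E₁ ⊆ E₂ → E₂ ∈ F) ∧
      ∀ P : Profile V A,
        (Dset a b P ∈ F → φ P = a) ∧
        (Dset b a P ∈ dualF Set.univ F → φ P = b) := by
  classical
  have hrange' : Set.range φ = {b, a} := by rw [hrange, Set.pair_comm]
  refine ⟨{S : Set V | φ (topProf a b S) = a}, ⟨⟨⟨Set.univ, allTop hab hrange hcsp⟩, ?_, ?_⟩, ?_⟩, ?_⟩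
  · -- ∅ ∉ F
    intro hmem
    have h1 : topProf a b (∅ : Set V) = topProf b a (Set.univ : Set V) := by
      funext v; simp [topProf]
    have h2 : φ (topProf a b (∅ : Set V)) = b := by
      rw [h1]; exact allTop hab.symm hrange' hcsp
    exact hab ((Set.mem_setOf_eq ▸ hmem).symm.trans h2)
  · -- superset closed
    intro E₁ E₂ h1 h12
    exact topMono hab hrange hcsp h1 h12
  · -- main properties
    intro P
    constructor
    · intro hD
      exact mainStep hab hrange hcsp P hD
    · intro hD
      obtain ⟨-, hnot⟩ := hD
      have hne : φ (topProf a b (Set.univ \ Dset b a P)) = b := by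
        rcases range_cases hrange (topProf a b (Set.univ \ Dset b a P)) with h | h
        · exact absurd h hnot
        · exact h
      have heq : topProf b a (Dset b a P) = topProf a b (Set.univ \ Dset b a P) := by
        funext v
        by_cases hv : v ∈ Dset b a P <;> simp [topProf, hv]
      exact mainStep hab.symm hrange' hcsp P (by rw [heq]; exact hne)
  · -- uniqueness
    intro F' hF'
    obtain ⟨-, hprop'⟩ := hF'
    ext E
    have hDa := Dset_topProf a b hab E
    have hDb := Dset_topProf' a b hab E
    constructor
    · intro hE'
      exact (hprop' (topProf a b E)).1 (by rw [hDa]; exact hE')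
    · intro hE
      by_contra hE'
      have : φ (topProf a b E) = b := by
        refine (hprop' (topProf a b E)).2 ?_
        rw [hDb]
        exact ⟨Set.subset_univ _, by simpa using hE'⟩
      exact hab ((Set.mem_setOf_eq ▸ hE).symm.trans this)
end
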